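/- (Foster criterion form of Theorem 1.) Suppose Assumption 1 holds with constants C (a positive integer) and δ > 0, and Assumption 2 holds with constant H > 0. Then there exists a real number z > 1 such that, defining V : Ω → ℝ by V(q) = Σ_{j∈I} z^{(q_j−C)_+} and the generator drift ΔV(q) := Σ_{i∈I} [ f_i(q)·(V(q+e_i) − V(q)) + g_i(q)·(V(q−e_i) − V(q)) ], the set { q ∈ Ω : ΔV(q) > −1 } is finite; that is, ΔV(q) ≤ −1 for all q outside a finite subset of Ω. -/

import Mathlib

/-!
Take `z = 1 + δ / (2H)`. A coordinate `q i ≤ C` contributes at most `(z - 1) f_i(q)` to the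
drift, and these contributions add up to at most `(z - 1) H = δ / 2`. A coordinate
`q i = C + m + 1` contributes `(z - 1) z^m (z f_i - g_i)`, and
`z f_i - g_i ≤ (f_i - g_i) + (z - 1) H < -δ / 2`; so once some coordinate exceeds `C + n` with
`z^n` large, its negative contribution beats everything else and the drift is at most `-1`.
Hence `ΔV > -1` only on the finite box `{q | ∀ i, q i ≤ C + n}`.
-/

open Finset

theorem Fintype.sum_comp_update_sub_sum {ι α M : Type*} [Fintype ι] [DecidableEq ι]
    [AddCommGroup M] (φ : α → M) (q : ι → α) (i : ι) (a : α) :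
    ∑ j, φ (Function.update q i a j) - ∑ j, φ (q j) = φ a - φ (q i) := by
  rw [← sum_sub_distrib, Finset.sum_eq_single i (fun j _ hj => by simp [hj]) (by simp)]
  simp

theorem Fintype.sum_le_add_sum_of_le {ι M : Type*} [Fintype ι] [DecidableEq ι] [AddCommMonoid M]
    [PartialOrder M] [IsOrderedAddMonoid M] {d b : ι → M}
    (hdb : ∀ i, d i ≤ b i) (hb : ∀ i, 0 ≤ b i) (i₀ : ι) :
    ∑ i, d i ≤ d i₀ + ∑ i, b i :=
  calc ∑ i, d i = d i₀ + ∑ i ∈ univ.erase i₀, d i :=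
        (add_sum_erase _ _ (mem_univ i₀)).symm
    _ ≤ d i₀ + ∑ i ∈ univ.erase i₀, b i := by gcongr with i; exact hdb i
    _ ≤ d i₀ + ∑ i, b i :=
      add_le_add_right (sum_le_sum_of_subset_of_nonneg (subset_univ _) fun i _ _ => hb i) _

section CoordinateDrift

variable {z a b : ℝ} {C x : ℕ}

theorem coordDrift_eq_of_lt (hx : C < x) :
    a * (z ^ (x + 1 - C) - z ^ (x - C)) + b * (z ^ (x - 1 - C) - z ^ (x - C))
      = (z - 1) * z ^ (x - 1 - C) * (z * a - b) := by
  obtain ⟨m, rfl⟩ := Nat.exists_eq_add_of_lt hx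
  rw [show C + m + 1 + 1 - C = m + 2 by omega, show C + m + 1 - C = m + 1 by omega,
    show C + m + 1 - 1 - C = m by omega]
  ring

theorem coordDrift_le (hz : 1 ≤ z) (ha : 0 ≤ a) (hab : C < x → z * a - b ≤ 0) :
    a * (z ^ (x + 1 - C) - z ^ (x - C)) + b * (z ^ (x - 1 - C) - z ^ (x - C)) ≤ (z - 1) * a := by
  rcases lt_trichotomy x C with hx | rfl | hx
  · rw [show x + 1 - C = 0 by omega, show x - C = 0 by omega, show x - 1 - C = 0 by omega]
    simpa using mul_nonneg (sub_nonneg.2 hz) ha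
  · simp [mul_comm]
  · rw [coordDrift_eq_of_lt hx]
    have : 0 ≤ (z - 1) * z ^ (x - 1 - C) :=
      mul_nonneg (sub_nonneg.2 hz) (pow_nonneg (by linarith) _)
    nlinarith [hab hx, mul_nonneg (sub_nonneg.2 hz) ha]

theorem coordDrift_le_neg_of_lt {ε : ℝ} (hx : C < x) (hz : 1 ≤ z) (hab : z * a - b ≤ -ε) :
    a * (z ^ (x + 1 - C) - z ^ (x - C)) + b * (z ^ (x - 1 - C) - z ^ (x - C))
      ≤ -(ε * (z - 1) * z ^ (x - 1 - C)) := by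
  rw [coordDrift_eq_of_lt hx]
  have : 0 ≤ (z - 1) * z ^ (x - 1 - C) :=
    mul_nonneg (sub_nonneg.2 hz) (pow_nonneg (by linarith) _)
  nlinarith

end CoordinateDrift

theorem foster_criterion_form_general
    (K : ℕ)
    (f g : Fin (2 * K) → (Fin (2 * K) → ℕ) → ℝ)
    (hf : ∀ i q, 0 ≤ f i q)
    (C : ℕ) (δ : ℝ) (hδ : 0 < δ)
    (assump1 : ∀ i (q : Fin (2 * K) → ℕ), C < q i → f i q - g i q < -δ)
    (H : ℝ) (hH : 0 < H)
    (assump2 : ∀ q : Fin (2 * K) → ℕ, ∑ i, f i q ≤ H) :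
    ∃ z : ℝ, 1 < z ∧
      {q : Fin (2 * K) → ℕ |
        -1 < ∑ i, (f i q * ((∑ j, z ^ (Function.update q i (q i + 1) j - C))
                              - ∑ j, z ^ (q j - C))
                 + g i q * ((∑ j, z ^ (Function.update q i (q i - 1) j - C))
                              - ∑ j, z ^ (q j - C)))}.Finite := by
  set z : ℝ := 1 + δ / (2 * H)
  have hzH : (z - 1) * H = δ / 2 := by simp only [z]; field_simp; ring
  have hz : 1 < z := by have := div_pos hδ (by positivity : 0 < 2 * H); simp only [z]; linarith
  obtain ⟨n, hn⟩ := pow_unbounded_of_one_lt ((δ / 2 + 1) / (δ / 2 * (z - 1))) hz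
  rw [div_lt_iff₀ (by nlinarith)] at hn
  refine ⟨z, hz, (Set.finite_Iic fun _ => C + n).subset fun q hq => ?_⟩
  by_contra hq_box
  obtain ⟨i₀, hi₀⟩ : ∃ i₀, C + n < q i₀ := by simpa [Pi.le_def] using hq_box
  simp only [Set.mem_ofPred_eq, Fintype.sum_comp_update_sub_sum (fun x => z ^ (x - C))] at hq
  have hf_le : ∀ i, f i q ≤ H := fun i =>
    (single_le_sum (fun j _ => hf j q) (mem_univ i)).trans (assump2 q)
  have hzfg : ∀ i, C < q i → z * f i q - g i q ≤ -(δ / 2) := fun i hi => by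
    nlinarith [assump1 i q hi, hf_le i]
  have hpow : z ^ n ≤ z ^ (q i₀ - 1 - C) := pow_le_pow_right₀ hz.le (by omega)
  have hi₀_drift :=
    coordDrift_le_neg_of_lt (C := C) (x := q i₀) (by omega) hz.le (hzfg i₀ (by omega))
  have hsum := Fintype.sum_le_add_sum_of_le
    (fun i => coordDrift_le hz.le (hf i q) fun hi => (hzfg i hi).trans (by linarith))
    (fun i => mul_nonneg (by linarith) (hf i q)) i₀
  have hbig : δ / 2 + 1 ≤ δ / 2 * (z - 1) * z ^ (q i₀ - 1 - C) := by
    nlinarith [mul_le_mul_of_nonneg_left hpow (by positivity : (0 : ℝ) ≤ δ / 2 * (z - 1))]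
  have hrest : (z - 1) * ∑ i, f i q ≤ δ / 2 :=
    hzH ▸ mul_le_mul_of_nonneg_left (assump2 q) (by linarith)
  rw [← mul_sum] at hsum
  linarith

/-- Foster criterion form of Theorem 1. Under Assumption 1 (negative
individual drift) and Assumption 2 (bounded incoming flow), there is `z > 1`
such that the generator drift `ΔV` of `V(q) = ∑ j, z ^ (q j − C)₊` satisfies
`ΔV(q) ≤ −1` outside a finite subset of `Ω = ℕ^I`, i.e. the set
`{q | ΔV(q) > −1}` is finite. The index set `I` is identified with
`Fin (2*K)`; `q ± e_i` is realized by `Function.update` (with truncated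
subtraction, the `g`-term vanishing when `q i = 0` since `g i q = 0` there). -/
theorem foster_criterion_form
    (K : ℕ) (hK : 0 < K)
    (f g : Fin (2 * K) → (Fin (2 * K) → ℕ) → ℝ)
    (hf : ∀ i q, 0 ≤ f i q) (hg : ∀ i q, 0 ≤ g i q)
    (hg0 : ∀ i q, q i = 0 → g i q = 0)
    (C : ℕ) (hC : 0 < C) (δ : ℝ) (hδ : 0 < δ)
    (assump1 : ∀ i (q : Fin (2 * K) → ℕ), C < q i → f i q - g i q < -δ)
    (H : ℝ) (hH : 0 < H)
    (assump2 : ∀ q : Fin (2 * K) → ℕ, ∑ i, f i q ≤ H) :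
    ∃ z : ℝ, 1 < z ∧
      {q : Fin (2 * K) → ℕ |
        -1 < ∑ i, (f i q * ((∑ j, z ^ (Function.update q i (q i + 1) j - C))
                              - ∑ j, z ^ (q j - C))
                 + g i q * ((∑ j, z ^ (Function.update q i (q i - 1) j - C))
                              - ∑ j, z ^ (q j - C)))}.Finite :=
  foster_criterion_form_general K f g hf C δ hδ assump1 H hH assump2
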